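/- Lucas-Pantograph-Pythagorean identities: for x ∈ ℂ and nonzero u, v ∈ ℂ, assuming the series defining sin_{s,t}(x,u), cos_{s,t}(x,u), sin_{s,t}(x,v) and cos_{s,t}(x,v) converge absolutely: (1) sin_{s,t}(x,u)·sin_{s,t}(x,v) + cos_{s,t}(x,u)·cos_{s,t}(x,v) = Σ_{n=0}^{∞} (−1)ⁿ·0̄_{u,v}^{(2n)}·x^{2n}/{2n}_{s,t}!; (2) if in addition s² + 4t ≠ 0, then sin_{s,t}(x,φ)·sin_{s,t}(x,φ') + cos_{s,t}(x,φ)·cos_{s,t}(x,φ') = 1. -/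

import Mathlib

open scoped BigOperators

noncomputable section

/-- The Lucas sequence `{n}_{s,t}`. -/
def lucasSeq (s t : ℂ) : ℕ → ℂ
  | 0 => 0
  | 1 => 1
  | n + 2 => s * lucasSeq s t (n + 1) + t * lucasSeq s t n

/-- The Lucastorial `{n}_{s,t}!`. -/
def lucasFact (s t : ℂ) : ℕ → ℂ
  | 0 => 1
  | n + 1 => lucasFact s t n * lucasSeq s t (n + 1)

/-- The Lucasnomial coefficient `{n choose k}_{s,t}`. -/
def lucasBinom (s t : ℂ) (n k : ℕ) : ℂ :=
  lucasFact s t n / (lucasFact s t k * lucasFact s t (n - k))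

/-- The `(u,v)`-deformed Lucasnomial power `(x ⊕_{u,v} y)^{(n)}`. -/
def lucasPow (s t u v x y : ℂ) (n : ℕ) : ℂ :=
  ∑ k ∈ Finset.range (n + 1),
    lucasBinom s t n k * u ^ ((n - k).choose 2) * v ^ (k.choose 2) * x ^ (n - k) * y ^ k

/-- The Lucas-derivative with respect to the roots `p = φ`, `q = φ'`. -/
def lucasDeriv (p q : ℂ) (f : ℂ → ℂ) (x : ℂ) : ℂ :=
  (f (p * x) - f (q * x)) / ((p - q) * x)

/-- The Lucas-derivative, extended by `0` at `0`, as an operator suitable for iteration. -/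
def lucasDeriv0 (p q : ℂ) (f : ℂ → ℂ) : ℂ → ℂ :=
  fun x => if x = 0 then 0 else (f (p * x) - f (q * x)) / ((p - q) * x)

/-- The Lucas-Pantograph exponential `exp_{s,t}(z,u)`. -/
def lucasExp (s t u z : ℂ) : ℂ :=
  ∑' n : ℕ, u ^ (n.choose 2) * z ^ n / lucasFact s t n

/-- The Lucas-Pantograph sine `sin_{s,t}(z,u)`. -/
def lucasSin (s t u z : ℂ) : ℂ :=
  ∑' n : ℕ, (-1 : ℂ) ^ n * u ^ ((2 * n + 1).choose 2) * z ^ (2 * n + 1) / lucasFact s t (2 * n + 1)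

/-- The Lucas-Pantograph cosine `cos_{s,t}(z,u)`. -/
def lucasCos (s t u z : ℂ) : ℂ :=
  ∑' n : ℕ, (-1 : ℂ) ^ n * u ^ ((2 * n).choose 2) * z ^ (2 * n) / lucasFact s t (2 * n)

/-- The `(u,v)`-deformed Lucasnomial zero `0̄_{u,v}^{(n)}`. -/
def lucasZero (s t u v : ℂ) (n : ℕ) : ℂ :=
  ∑ k ∈ Finset.range (n + 1),
    (-1 : ℂ) ^ k * lucasBinom s t n k * u ^ ((n - k).choose 2) * v ^ (k.choose 2)

/-!
Write `E_u(z) = exp_{s,t}(z,u)`. Whenever `c² = -1`, splitting the series into even and odd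
terms gives `E_u(c x) = cos_{s,t}(x,u) + c sin_{s,t}(x,u)`, and the Cauchy product
`E_u(z) E_v(-z)` has coefficients `0̄_{u,v}^{(n)} zⁿ / {n}!`. Adding the products for `z = i x` and
`z = -i x` cancels the odd coefficients and leaves `2 (sin·sin + cos·cos)`, which is (1).

For (2), `φ + φ' = s` and `φ φ' = -t` give `{a+b} = φᵃ {b} + φ'ᵇ {a}`, hence a Pascal rule for the
Lucasnomials and `0̄_{φ,φ'}^{(n+1)} = (φⁿ - φ'ⁿ) 0̄_{φ,φ'}^{(n)}`. Since the factor vanishes at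
`n = 0`, every coefficient but the constant one `1` is zero.
-/

theorem HasSum.comp_two_mul {M : Type*} [AddCommMonoid M] [TopologicalSpace M] {f : ℕ → M} {a : M}
    (hf : HasSum f a) (hodd : ∀ n, f (2 * n + 1) = 0) : HasSum (fun n ↦ f (2 * n)) a := by
  refine (Function.Injective.hasSum_iff (mul_right_injective₀ two_ne_zero) fun m hm ↦ ?_).mpr hf
  obtain ⟨n, rfl | rfl⟩ := Nat.even_or_odd' m
  · exact absurd ⟨n, rfl⟩ hm
  · exact hodd n

section LucasAlgebra

variable {s t p q : ℂ}

theorem lucasSeq_succ_eq_pow_add (hsum : p + q = s) (hprod : p * q = -t) (n : ℕ) :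
    lucasSeq s t (n + 1) = p ^ n + q * lucasSeq s t n := by
  induction n with
  | zero => simp [lucasSeq]
  | succ n ih =>
    rw [lucasSeq, ih]
    linear_combination (p ^ n + lucasSeq s t n * q) * hsum.symm + lucasSeq s t n * hprod

theorem lucasSeq_add (hsum : p + q = s) (hprod : p * q = -t) (a b : ℕ) :
    lucasSeq s t (a + b) = p ^ a * lucasSeq s t b + q ^ b * lucasSeq s t a := by
  induction b using Nat.twoStepInduction with
  | zero => simp [lucasSeq]
  | one => simp [lucasSeq, lucasSeq_succ_eq_pow_add hsum hprod]
  | more b ih₀ ih₁ =>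
    rw [← add_assoc] at ih₁
    rw [← add_assoc, lucasSeq, lucasSeq, ih₀, ih₁]
    linear_combination q ^ (b + 1) * lucasSeq s t a * hsum.symm + q ^ b * lucasSeq s t a * hprod

theorem lucasFact_ne_zero (hL : ∀ n : ℕ, 1 ≤ n → lucasSeq s t n ≠ 0) (n : ℕ) :
    lucasFact s t n ≠ 0 := by
  induction n with
  | zero => exact one_ne_zero
  | succ n ih => exact mul_ne_zero ih (hL (n + 1) n.succ_pos)

theorem lucasBinom_add_left (k j : ℕ) :
    lucasBinom s t (k + j) k = lucasFact s t (k + j) / (lucasFact s t k * lucasFact s t j) := by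
  rw [lucasBinom, Nat.add_sub_cancel_left]

theorem lucasBinom_zero_right (hL : ∀ n : ℕ, 1 ≤ n → lucasSeq s t n ≠ 0) (n : ℕ) :
    lucasBinom s t n 0 = 1 := by
  simp [lucasBinom, lucasFact, div_self (lucasFact_ne_zero hL n)]

theorem lucasBinom_self (hL : ∀ n : ℕ, 1 ≤ n → lucasSeq s t n ≠ 0) (n : ℕ) :
    lucasBinom s t n n = 1 := by
  simp [lucasBinom, lucasFact, div_self (lucasFact_ne_zero hL n)]

theorem lucasBinom_succ_succ (hsum : p + q = s) (hprod : p * q = -t)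
    (hL : ∀ n : ℕ, 1 ≤ n → lucasSeq s t n ≠ 0) (k j : ℕ) :
    lucasBinom s t (k + j + 2) (k + 1)
      = p ^ (k + 1) * lucasBinom s t (k + j + 1) (k + 1)
        + q ^ (j + 1) * lucasBinom s t (k + j + 1) k := by
  have hF := lucasFact_ne_zero hL
  rw [show k + j + 2 = (k + 1) + (j + 1) by ring, lucasBinom_add_left,
    show k + j + 1 = (k + 1) + j by ring, lucasBinom_add_left,
    show k + 1 + j = k + (j + 1) by ring, lucasBinom_add_left]
  have hsplit := lucasSeq_add hsum hprod (k + 1) (j + 1)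
  rw [show k + 1 + (j + 1) = k + (j + 1) + 1 by ring] at hsplit ⊢
  simp only [lucasFact]
  have hk := hL (k + 1) k.succ_pos
  have hj := hL (j + 1) j.succ_pos
  field_simp
  rw [hsplit]
  ring

theorem lucasZero_succ (hsum : p + q = s) (hprod : p * q = -t)
    (hL : ∀ n : ℕ, 1 ≤ n → lucasSeq s t n ≠ 0) (n : ℕ) :
    lucasZero s t p q (n + 1) = (p ^ n - q ^ n) * lucasZero s t p q n := by
  set T : ℕ → ℕ → ℂ := fun n k =>
    (-1 : ℂ) ^ k * lucasBinom s t n k * p ^ ((n - k).choose 2) * q ^ (k.choose 2) with hT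
  have interior : ∀ k ∈ Finset.range n,
      T (n + 1) (k + 1) = p ^ n * T n (k + 1) - q ^ n * T n k := by
    intro k hk
    obtain ⟨j, rfl⟩ : ∃ j, n = k + j + 1 := ⟨n - k - 1, by simp at hk; omega⟩
    simp only [hT, lucasBinom_succ_succ hsum hprod hL,
      show k + j + 1 + 1 - (k + 1) = j + 1 by omega, show k + j + 1 - (k + 1) = j by omega,
      show k + j + 1 - k = j + 1 by omega, Nat.choose_succ_succ', Nat.choose_one_right]
    ring
  have first : T (n + 1) 0 = p ^ n * T n 0 := by
    simp only [hT, lucasBinom_zero_right hL, Nat.sub_zero, Nat.choose_succ_succ',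
      Nat.choose_one_right]
    ring
  have last : T (n + 1) (n + 1) = -(q ^ n * T n n) := by
    simp only [hT, lucasBinom_self hL, Nat.sub_self, Nat.choose_succ_succ', Nat.choose_one_right]
    ring
  calc lucasZero s t p q (n + 1)
      = ∑ k ∈ Finset.range n, T (n + 1) (k + 1) + T (n + 1) (n + 1) + T (n + 1) 0 := by
        rw [lucasZero, Finset.sum_range_succ', Finset.sum_range_succ]
    _ = p ^ n * (∑ k ∈ Finset.range n, T n (k + 1) + T n 0)
          - q ^ n * (∑ k ∈ Finset.range n, T n k + T n n) := by
        rw [Finset.sum_congr rfl interior, Finset.sum_sub_distrib, ← Finset.mul_sum,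
          ← Finset.mul_sum, first, last]
        ring
    _ = (p ^ n - q ^ n) * lucasZero s t p q n := by
        rw [← Finset.sum_range_succ', ← Finset.sum_range_succ, lucasZero]
        ring

theorem lucasZero_succ_eq_zero (hsum : p + q = s) (hprod : p * q = -t)
    (hL : ∀ n : ℕ, 1 ≤ n → lucasSeq s t n ≠ 0) (n : ℕ) : lucasZero s t p q (n + 1) = 0 := by
  induction n with
  | zero => rw [lucasZero_succ hsum hprod hL]; ring
  | succ n ih => rw [lucasZero_succ hsum hprod hL, ih, mul_zero]

end LucasAlgebra

section LucasSeries

variable {s t u v x z c : ℂ}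

def lucasExpTerm (s t u z : ℂ) (n : ℕ) : ℂ :=
  u ^ n.choose 2 * z ^ n / lucasFact s t n

def lucasSinTerm (s t u x : ℂ) (n : ℕ) : ℂ :=
  (-1 : ℂ) ^ n * u ^ ((2 * n + 1).choose 2) * x ^ (2 * n + 1) / lucasFact s t (2 * n + 1)

def lucasCosTerm (s t u x : ℂ) (n : ℕ) : ℂ :=
  (-1 : ℂ) ^ n * u ^ ((2 * n).choose 2) * x ^ (2 * n) / lucasFact s t (2 * n)

theorem lucasExpTerm_two_mul (hc : c ^ 2 = -1) (n : ℕ) :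
    lucasExpTerm s t u (c * x) (2 * n) = lucasCosTerm s t u x n := by
  rw [lucasExpTerm, lucasCosTerm, mul_pow, pow_mul, hc]
  ring

theorem lucasExpTerm_two_mul_add_one (hc : c ^ 2 = -1) (n : ℕ) :
    lucasExpTerm s t u (c * x) (2 * n + 1) = c * lucasSinTerm s t u x n := by
  rw [lucasExpTerm, lucasSinTerm, mul_pow, pow_succ, pow_mul, hc]
  ring

theorem summable_norm_lucasExpTerm (hc : c ^ 2 = -1)
    (hsin : Summable fun n ↦ ‖lucasSinTerm s t u x n‖)
    (hcos : Summable fun n ↦ ‖lucasCosTerm s t u x n‖) :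
    Summable fun n ↦ ‖lucasExpTerm s t u (c * x) n‖ := by
  refine Summable.even_add_odd ?_ ?_
  · simpa only [lucasExpTerm_two_mul hc] using hcos
  · simpa only [lucasExpTerm_two_mul_add_one hc, norm_mul] using hsin.mul_left ‖c‖

theorem lucasExp_mul_eq_lucasCos_add (hc : c ^ 2 = -1)
    (hsin : Summable fun n ↦ ‖lucasSinTerm s t u x n‖)
    (hcos : Summable fun n ↦ ‖lucasCosTerm s t u x n‖) :
    lucasExp s t u (c * x) = lucasCos s t u x + c * lucasSin s t u x := by
  refine HasSum.tsum_eq (f := lucasExpTerm s t u (c * x)) (HasSum.even_add_odd ?_ ?_)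
  · simpa only [lucasExpTerm_two_mul hc] using
      show HasSum (lucasCosTerm s t u x) (lucasCos s t u x) from hcos.of_norm.hasSum
  · simpa only [lucasExpTerm_two_mul_add_one hc] using
      (show HasSum (lucasSinTerm s t u x) (lucasSin s t u x) from hsin.of_norm.hasSum).mul_left c

theorem hasSum_lucasExp_mul_lucasExp_neg (hL : ∀ n : ℕ, 1 ≤ n → lucasSeq s t n ≠ 0)
    (hu : Summable fun n ↦ ‖lucasExpTerm s t u z n‖)
    (hv : Summable fun n ↦ ‖lucasExpTerm s t v (-z) n‖) :
    HasSum (fun n ↦ lucasZero s t u v n * z ^ n / lucasFact s t n)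
      (lucasExp s t u z * lucasExp s t v (-z)) := by
  have hF := lucasFact_ne_zero hL
  have hcoeff : ∀ n, ∑ k ∈ Finset.range (n + 1),
      lucasExpTerm s t v (-z) k * lucasExpTerm s t u z (n - k)
        = lucasZero s t u v n * z ^ n / lucasFact s t n := by
    intro n
    rw [lucasZero, Finset.sum_mul, Finset.sum_div]
    refine Finset.sum_congr rfl fun k hk ↦ ?_
    obtain ⟨j, rfl⟩ : ∃ j, n = k + j := ⟨n - k, by simp at hk; omega⟩
    rw [Nat.add_sub_cancel_left, lucasBinom_add_left, lucasExpTerm, lucasExpTerm, neg_pow, pow_add]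
    field_simp [hF k, hF j, hF (k + j)]
  have hprod := hasSum_sum_range_mul_of_summable_norm hv hu
  simp only [hcoeff] at hprod
  rw [mul_comm] at hprod
  exact hprod

theorem hasSum_lucasSin_mul_lucasSin_add_lucasCos_mul_lucasCos
    (hL : ∀ n : ℕ, 1 ≤ n → lucasSeq s t n ≠ 0)
    (hsinu : Summable fun n ↦ ‖lucasSinTerm s t u x n‖)
    (hcosu : Summable fun n ↦ ‖lucasCosTerm s t u x n‖)
    (hsinv : Summable fun n ↦ ‖lucasSinTerm s t v x n‖)
    (hcosv : Summable fun n ↦ ‖lucasCosTerm s t v x n‖) :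
    HasSum (fun n : ℕ =>
        (-1 : ℂ) ^ n * lucasZero s t u v (2 * n) * x ^ (2 * n) / lucasFact s t (2 * n))
      (lucasSin s t u x * lucasSin s t v x + lucasCos s t u x * lucasCos s t v x) := by
  have hI : Complex.I ^ 2 = -1 := Complex.I_sq
  have hnI : (-Complex.I) ^ 2 = -1 := by rw [neg_sq, Complex.I_sq]
  have hplus := hasSum_lucasExp_mul_lucasExp_neg hL (z := Complex.I * x)
    (summable_norm_lucasExpTerm hI hsinu hcosu)
    (neg_mul Complex.I x ▸ summable_norm_lucasExpTerm hnI hsinv hcosv)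
  have hminus := hasSum_lucasExp_mul_lucasExp_neg hL (z := -Complex.I * x)
    (summable_norm_lucasExpTerm hnI hsinu hcosu)
    (by simpa only [neg_mul, neg_neg] using summable_norm_lucasExpTerm hI hsinv hcosv)
  rw [← neg_mul, lucasExp_mul_eq_lucasCos_add hI hsinu hcosu,
    lucasExp_mul_eq_lucasCos_add hnI hsinv hcosv] at hplus
  rw [neg_mul, neg_neg, ← neg_mul, lucasExp_mul_eq_lucasCos_add hI hsinv hcosv,
    lucasExp_mul_eq_lucasCos_add hnI hsinu hcosu] at hminus
  have heven := (hplus.add hminus).comp_two_mul fun n ↦ by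
    rw [neg_mul, Odd.neg_pow ⟨n, rfl⟩]
    ring
  have hterm : ∀ n : ℕ,
      lucasZero s t u v (2 * n) * (Complex.I * x) ^ (2 * n) / lucasFact s t (2 * n)
        + lucasZero s t u v (2 * n) * (-Complex.I * x) ^ (2 * n) / lucasFact s t (2 * n)
      = 2 * ((-1 : ℂ) ^ n * lucasZero s t u v (2 * n) * x ^ (2 * n) / lucasFact s t (2 * n)) := by
    intro n
    rw [mul_pow, mul_pow, pow_mul Complex.I, pow_mul (-Complex.I), hI, hnI]
    ring
  have hvalue : (lucasCos s t u x + Complex.I * lucasSin s t u x)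
        * (lucasCos s t v x + -Complex.I * lucasSin s t v x)
      + (lucasCos s t u x + -Complex.I * lucasSin s t u x)
        * (lucasCos s t v x + Complex.I * lucasSin s t v x)
      = 2 * (lucasSin s t u x * lucasSin s t v x + lucasCos s t u x * lucasCos s t v x) := by
    linear_combination (-2 : ℂ) * lucasSin s t u x * lucasSin s t v x * hI
  rw [hvalue] at heven
  simp only [hterm] at heven
  exact (hasSum_mul_left_iff two_ne_zero).mp heven

end LucasSeries

theorem lucas_pythagorean_general (s t : ℂ)
    (hL : ∀ n : ℕ, 1 ≤ n → lucasSeq s t n ≠ 0)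
    (d : ℂ) (hd : d ^ 2 = s ^ 2 + 4 * t)
    (x u v : ℂ)
    (hconvsu : Summable fun n : ℕ =>
      ‖(-1 : ℂ) ^ n * u ^ ((2 * n + 1).choose 2) * x ^ (2 * n + 1) / lucasFact s t (2 * n + 1)‖)
    (hconvcu : Summable fun n : ℕ =>
      ‖(-1 : ℂ) ^ n * u ^ ((2 * n).choose 2) * x ^ (2 * n) / lucasFact s t (2 * n)‖)
    (hconvsv : Summable fun n : ℕ =>
      ‖(-1 : ℂ) ^ n * v ^ ((2 * n + 1).choose 2) * x ^ (2 * n + 1) / lucasFact s t (2 * n + 1)‖)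
    (hconvcv : Summable fun n : ℕ =>
      ‖(-1 : ℂ) ^ n * v ^ ((2 * n).choose 2) * x ^ (2 * n) / lucasFact s t (2 * n)‖) :
    HasSum (fun n : ℕ =>
        (-1 : ℂ) ^ n * lucasZero s t u v (2 * n) * x ^ (2 * n) / lucasFact s t (2 * n))
      (lucasSin s t u x * lucasSin s t v x + lucasCos s t u x * lucasCos s t v x) ∧
    (s ^ 2 + 4 * t ≠ 0 → u = (s + d) / 2 → v = (s - d) / 2 →
      lucasSin s t u x * lucasSin s t v x + lucasCos s t u x * lucasCos s t v x = 1) := by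
  have hseries :=
    hasSum_lucasSin_mul_lucasSin_add_lucasCos_mul_lucasCos hL hconvsu hconvcu hconvsv hconvcv
  refine ⟨hseries, fun _ hu hv ↦ ?_⟩
  subst hu hv
  have hroots : (s + d) / 2 + (s - d) / 2 = s := by ring
  have hprod : (s + d) / 2 * ((s - d) / 2) = -t := by linear_combination -hd / 4
  refine hseries.unique ((hasSum_single 0 ?_).trans ?_)
  rintro (_ | n) hn
  · exact absurd rfl hn
  · rw [show 2 * (n + 1) = 2 * n + 1 + 1 by ring, lucasZero_succ_eq_zero hroots hprod hL, mul_zero,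
      zero_mul, zero_div]
  · simp [lucasZero, lucasBinom, lucasFact]

/-- Lucas-Pantograph-Pythagorean identities, where `φ = (s+d)/2`, `φ' = (s-d)/2`
with `d` a square root of `s²+4t`. -/
theorem lucas_pythagorean (s t : ℂ) (hs : s ≠ 0) (ht : t ≠ 0)
    (hL : ∀ n : ℕ, 1 ≤ n → lucasSeq s t n ≠ 0)
    (d : ℂ) (hd : d ^ 2 = s ^ 2 + 4 * t)
    (x u v : ℂ) (hu : u ≠ 0) (hv : v ≠ 0)
    (hconvsu : Summable fun n : ℕ =>
      ‖(-1 : ℂ) ^ n * u ^ ((2 * n + 1).choose 2) * x ^ (2 * n + 1) / lucasFact s t (2 * n + 1)‖)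
    (hconvcu : Summable fun n : ℕ =>
      ‖(-1 : ℂ) ^ n * u ^ ((2 * n).choose 2) * x ^ (2 * n) / lucasFact s t (2 * n)‖)
    (hconvsv : Summable fun n : ℕ =>
      ‖(-1 : ℂ) ^ n * v ^ ((2 * n + 1).choose 2) * x ^ (2 * n + 1) / lucasFact s t (2 * n + 1)‖)
    (hconvcv : Summable fun n : ℕ =>
      ‖(-1 : ℂ) ^ n * v ^ ((2 * n).choose 2) * x ^ (2 * n) / lucasFact s t (2 * n)‖) :
    HasSum (fun n : ℕ =>
        (-1 : ℂ) ^ n * lucasZero s t u v (2 * n) * x ^ (2 * n) / lucasFact s t (2 * n))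
      (lucasSin s t u x * lucasSin s t v x + lucasCos s t u x * lucasCos s t v x) ∧
    (s ^ 2 + 4 * t ≠ 0 → u = (s + d) / 2 → v = (s - d) / 2 →
      lucasSin s t u x * lucasSin s t v x + lucasCos s t u x * lucasCos s t v x = 1) :=
  lucas_pythagorean_general s t hL d hd x u v hconvsu hconvcu hconvsv hconvcv
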